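/- arXiv:1812.09370 — 3 statements merged into one kernel-verified Lean document; each statement's English description precedes it below -/
import Mathlib

section
/- Let S = clade(T₁) ∪ clade(T₂) for rooted trees T₁, T₂ on leaf set [n], and let CIP(S) be the poset (ordered by inclusion) consisting of all elements of S together with all intersections of elements of S having at least two elements. Then every element of CIP(S) \ S is the intersection of exactly two elements of S, and CIP(S) is a join-semilattice: any two elements A, B ∈ CIP(S) have a least upper bound in CIP(S). -/
/-!
Every member of `CIP(S)` is the intersection of a nonempty subfamily of `S`. Splitting such a
subfamily into its clades from `T₁` and from `T₂`, each part has a nonempty intersection, which by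
laminarity is a single clade of that tree; hence every nonempty member of `CIP(S)` is `B ∩ C` with
`B ∈ clade(T₁)` and `C ∈ clade(T₂)`. For the join, the intersection `J` of all members of `S`
containing `A ∪ B` lies below every member of `CIP(S)` containing `A` and `B`, and belongs to
`CIP(S)` itself: it has at least two elements, or it is a leaf, or it is empty and then equals `A`.
-/

/-- A rooted tree on leaf set `[n]`, identified with its family of clades. -/
def IsCladeFamily {n : ℕ} (F : Finset (Finset (Fin n))) : Prop :=
  Finset.univ ∈ F ∧ (∀ i : Fin n, {i} ∈ F) ∧
  ∀ A ∈ F, ∀ B ∈ F, A ⊆ B ∨ B ⊆ A ∨ Disjoint A B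

/-- The clade intersection poset `CIP(S)`: the members of `S` together with all
intersections of (one or more) members of `S` having at least two elements, ordered by
inclusion. -/
def CIP {n : ℕ} (S : Finset (Finset (Fin n))) : Finset (Finset (Fin n)) :=
  S ∪ ((S.powerset.filter (fun P => P.Nonempty)).image (fun P => P.inf id)).filter
      (fun A => 2 ≤ A.card)

open Finset

def IsLaminar {α : Type*} (F : Finset (Finset α)) : Prop :=
  ∀ A ∈ F, ∀ B ∈ F, A ⊆ B ∨ B ⊆ A ∨ Disjoint A B

lemma IsLaminar.inf_mem {α : Type*} [Fintype α] [DecidableEq α] {F : Finset (Finset α)}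
    (hF : IsLaminar F) (huniv : univ ∈ F) {P : Finset (Finset α)} (hPF : P ⊆ F)
    (hne : (P.inf id).Nonempty) : P.inf id ∈ F := by
  induction P using Finset.induction_on with
  | empty => simpa using huniv
  | insert a s _ ih =>
    rw [insert_subset_iff] at hPF
    rw [inf_insert, id, inf_eq_inter] at hne ⊢
    have hs : s.inf id ∈ F := ih hPF.2 (hne.mono inter_subset_right)
    rcases hF a hPF.1 _ hs with h | h | h
    · rw [inter_eq_left.mpr h]; exact hPF.1
    · rwa [inter_eq_right.mpr h]
    · exact absurd (disjoint_iff_inter_eq_empty.mp h) hne.ne_empty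

section CIP

variable {n : ℕ} {S : Finset (Finset (Fin n))}

lemma exists_inf_eq_of_mem_CIP {K : Finset (Fin n)} (hK : K ∈ CIP S) :
    ∃ P ⊆ S, P.Nonempty ∧ P.inf id = K := by
  simp only [CIP, mem_union, mem_filter, mem_image, mem_powerset] at hK
  rcases hK with hK | ⟨⟨P, ⟨hPS, hP⟩, rfl⟩, -⟩
  · exact ⟨{K}, singleton_subset_iff.mpr hK, singleton_nonempty K, by simp⟩
  · exact ⟨P, hPS, hP, rfl⟩

lemma inf_mem_CIP (hsingleton : ∀ i, {i} ∈ S) {P : Finset (Finset (Fin n))} (hPS : P ⊆ S)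
    (hP : P.Nonempty) (hne : (P.inf id).Nonempty) : P.inf id ∈ CIP S := by
  obtain hcard | hcard := lt_or_ge (P.inf id).card 2
  · obtain ⟨i, hi⟩ := card_eq_one.mp (le_antisymm (Nat.lt_succ_iff.mp hcard) hne.card_pos)
    exact mem_union_left _ (hi ▸ hsingleton i)
  · exact mem_union_right _ <| mem_filter.mpr
      ⟨mem_image.mpr ⟨P, mem_filter.mpr ⟨mem_powerset.mpr hPS, hP⟩, rfl⟩, hcard⟩

lemma two_le_card_of_mem_CIP_of_notMem {A : Finset (Fin n)} (hA : A ∈ CIP S) (hAS : A ∉ S) :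
    2 ≤ A.card := by
  rcases mem_union.mp hA with hA | hA
  · exact absurd hA hAS
  · exact (mem_filter.mp hA).2

lemma inf_filter_superset_subset_of_mem_CIP {X K : Finset (Fin n)} (hK : K ∈ CIP S)
    (hXK : X ⊆ K) : (S.filter (X ⊆ ·)).inf id ⊆ K := by
  obtain ⟨P, hPS, -, rfl⟩ := exists_inf_eq_of_mem_CIP hK
  exact inf_mono fun Y hY ↦ mem_filter.mpr ⟨hPS hY, hXK.trans (inf_le (f := id) hY)⟩

lemma exists_join_mem_CIP (huniv : univ ∈ S) (hsingleton : ∀ i, {i} ∈ S)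
    {A B : Finset (Fin n)} (hA : A ∈ CIP S) :
    ∃ J ∈ CIP S, A ⊆ J ∧ B ⊆ J ∧ ∀ K ∈ CIP S, A ⊆ K → B ⊆ K → J ⊆ K := by
  set J := (S.filter (A ∪ B ⊆ ·)).inf id
  have hABJ : A ∪ B ⊆ J := Finset.le_inf fun Y hY ↦ (mem_filter.mp hY).2
  have hJ : J ∈ CIP S := by
    obtain hJ | hJ := J.eq_empty_or_nonempty
    · rwa [hJ, ← subset_empty.mp (hJ ▸ subset_union_left.trans hABJ)]
    · exact inf_mem_CIP hsingleton (filter_subset _ S)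
        ⟨univ, mem_filter.mpr ⟨huniv, subset_univ _⟩⟩ hJ
  exact ⟨J, hJ, subset_union_left.trans hABJ, subset_union_right.trans hABJ,
    fun K hK hAK hBK ↦ inf_filter_superset_subset_of_mem_CIP hK (union_subset hAK hBK)⟩

lemma exists_eq_inter_of_mem_CIP_union {F₁ F₂ : Finset (Finset (Fin n))}
    (hF₁ : IsLaminar F₁) (huniv₁ : univ ∈ F₁) (hF₂ : IsLaminar F₂) (huniv₂ : univ ∈ F₂)
    {K : Finset (Fin n)} (hK : K ∈ CIP (F₁ ∪ F₂)) (hne : K.Nonempty) :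
    ∃ B ∈ F₁, ∃ C ∈ F₂, K = B ∩ C := by
  obtain ⟨P, hPS, -, rfl⟩ := exists_inf_eq_of_mem_CIP hK
  have hP : P = P.filter (· ∈ F₁) ∪ P.filter (· ∈ F₂) := by
    rw [← filter_or, filter_true_of_mem fun Y hY ↦ mem_union.mp (hPS hY)]
  have hinf : P.inf id = (P.filter (· ∈ F₁)).inf id ∩ (P.filter (· ∈ F₂)).inf id := by
    rw [← inf_eq_inter, ← inf_union, ← hP]
  rw [hinf] at hne ⊢
  exact ⟨_, hF₁.inf_mem huniv₁ (fun _ hY ↦ (mem_filter.mp hY).2) (hne.mono inter_subset_left),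
    _, hF₂.inf_mem huniv₂ (fun _ hY ↦ (mem_filter.mp hY).2) (hne.mono inter_subset_right), rfl⟩

end CIP

/-- For `S = clade(T₁) ∪ clade(T₂)`: every element of `CIP(S) \ S` is the intersection of
exactly two elements of `S`, and `CIP(S)` is a join-semilattice: any two of its elements
have a least upper bound in `CIP(S)`. -/
theorem cip_intersections_and_join {n : ℕ} (F₁ F₂ : Finset (Finset (Fin n)))
    (h₁ : IsCladeFamily F₁) (h₂ : IsCladeFamily F₂) :
    (∀ A ∈ CIP (F₁ ∪ F₂), A ∉ F₁ ∪ F₂ →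
      ∃ B ∈ F₁ ∪ F₂, ∃ C ∈ F₁ ∪ F₂, B ≠ C ∧ A = B ∩ C) ∧
    (∀ A ∈ CIP (F₁ ∪ F₂), ∀ B ∈ CIP (F₁ ∪ F₂),
      ∃ J ∈ CIP (F₁ ∪ F₂), A ⊆ J ∧ B ⊆ J ∧
        ∀ K ∈ CIP (F₁ ∪ F₂), A ⊆ K → B ⊆ K → J ⊆ K) := by
  obtain ⟨huniv₁, hsingleton₁, hF₁⟩ := h₁
  obtain ⟨huniv₂, -, hF₂⟩ := h₂
  refine ⟨fun A hA hAS ↦ ?_, fun A hA B _ ↦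
    exists_join_mem_CIP (mem_union_left _ huniv₁) (fun i ↦ mem_union_left _ (hsingleton₁ i)) hA⟩
  have hne : A.Nonempty := card_pos.mp (two_pos.trans_le (two_le_card_of_mem_CIP_of_notMem hA hAS))
  obtain ⟨B, hB, C, hC, rfl⟩ := exists_eq_inter_of_mem_CIP_union hF₁ huniv₁ hF₂ huniv₂ hA hne
  refine ⟨B, mem_union_left _ hB, C, mem_union_right _ hC, ?_, rfl⟩
  rintro rfl
  exact hAS (by simpa using mem_union_left F₂ hB)
end

section
/- The cone K_T of all ultrametrics on [n] with topology a fixed rooted tree T is, modulo the lineality space spanned by the all-ones vector, generated by the vectors {−v_C : C a nontrivial clade of T}, where v_C is the 0/1 characteristic vector of the set of pairs contained in C. Concretely: every ultrametric δ with topology T can be written as δ = m·v_{[n]} − Σ_{C ∈ clade°(T)} t_C·v_C with all t_C ≥ 0 and m = max(δ), and conversely every such combination is an ultrametric with topology refined by T. -/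
/-- An ultrametric, as a symmetric function on pairs. -/
def IsUltrametric {n : ℕ} (δ : Fin n → Fin n → ℝ) : Prop :=
  (∀ u v : Fin n, δ u v = δ v u) ∧
  ∀ u v w : Fin n, u ≠ v → u ≠ w → v ≠ w → δ u v ≤ max (δ u w) (δ v w)

/-- The most recent common ancestor of `u` and `v` in the tree with clade family `F`:
the smallest clade containing both. -/
def mca {n : ℕ} (F : Finset (Finset (Fin n))) (u v : Fin n) : Finset (Fin n) :=
  (F.filter (fun A => u ∈ A ∧ v ∈ A)).inf id

/-- The characteristic vector `v_C` of the pairs inside `C`, evaluated at the pair `{u,v}`. -/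
def charVec {n : ℕ} (C : Finset (Fin n)) (u v : Fin n) : ℝ :=
  if u ∈ C ∧ v ∈ C then 1 else 0

/-!
Every clade `C ≠ [n]` has a parent clade `p(C)`, the smallest clade strictly containing it, and
the weight `t_C := w(p(C)) - w(C)` of the edge `C → p(C)` is nonnegative by monotonicity of `w`.
The clades containing a pair `{u, v}` form the chain from `mca u v` up to the root, so
`w(mca u v)` telescopes to `w([n]) - ∑ t_C` over that chain. Conversely, a combination
`m - ∑ t_C v_C` takes the value `g(mca u v)` at `{u, v}` for a function `g` monotone on clades,
and any such function of the most recent common ancestor is an ultrametric.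
-/

open Finset

lemma inf_id_mem_of_isChain {α : Type*} [SemilatticeInf α] [OrderTop α] {G : Finset α}
    (hG : G.Nonempty) (hchain : IsChain (· ≤ ·) (G : Set α)) : G.inf id ∈ G := by
  rw [← inf'_eq_inf hG]
  refine inf'_mem (G : Set α) (fun A hA B hB => ?_) G hG id fun A hA => hA
  rcases hchain.total hA hB with h | h
  · rwa [inf_eq_left.2 h]
  · rwa [inf_eq_right.2 h]

lemma antitone_sum_filter_superset {α : Type*} [DecidableEq α] (s : Finset (Finset α))
    {t : Finset α → ℝ} (ht : ∀ C, 0 ≤ t C) :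
    Antitone fun D : Finset α => ∑ C ∈ s with D ⊆ C, t C :=
  fun _ _ hAB => sum_le_sum_of_subset_of_nonneg (monotone_filter_right s fun _ _ => hAB.trans)
    fun C _ _ => ht C

section Clades

variable {n : ℕ} {F : Finset (Finset (Fin n))}

lemma mca_comm (F : Finset (Finset (Fin n))) (u v : Fin n) : mca F u v = mca F v u := by
  simp only [mca, and_comm]

lemma mca_subset {C : Finset (Fin n)} {u v : Fin n} (hC : C ∈ F) (hu : u ∈ C) (hv : v ∈ C) :
    mca F u v ⊆ C :=
  inf_le (f := id) (mem_filter.2 ⟨hC, hu, hv⟩)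

def parent (F : Finset (Finset (Fin n))) (C : Finset (Fin n)) : Finset (Fin n) :=
  (F.filter (C ⊂ ·)).inf id

lemma parent_subset {B C : Finset (Fin n)} (hB : B ∈ F) (hCB : C ⊂ B) : parent F C ⊆ B :=
  inf_le (f := id) (mem_filter.2 ⟨hB, hCB⟩)

noncomputable def branchLength (F : Finset (Finset (Fin n))) (w : Finset (Fin n) → ℝ)
    (C : Finset (Fin n)) : ℝ :=
  if C ∈ F ∧ C.Nonempty ∧ C ≠ univ then w (parent F C) - w C else 0

namespace IsCladeFamily

variable (hF : IsCladeFamily F)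
include hF

lemma subset_or_subset {A B : Finset (Fin n)} (hA : A ∈ F) (hB : B ∈ F) {x : Fin n}
    (hxA : x ∈ A) (hxB : x ∈ B) : A ⊆ B ∨ B ⊆ A :=
  (hF.2.2 A hA B hB).imp_right (Or.resolve_right · (not_disjoint_iff.2 ⟨x, hxA, hxB⟩))

lemma mca_mem_filter (u v : Fin n) : mca F u v ∈ F.filter (fun A => u ∈ A ∧ v ∈ A) := by
  refine inf_id_mem_of_isChain ⟨univ, by simp [hF.1]⟩ fun A hA B hB _ => ?_
  rw [mem_coe, mem_filter] at hA hB
  exact hF.subset_or_subset hA.1 hB.1 hA.2.1 hB.2.1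

lemma mca_subset_iff {C : Finset (Fin n)} (hC : C ∈ F) (u v : Fin n) :
    mca F u v ⊆ C ↔ u ∈ C ∧ v ∈ C := by
  obtain ⟨-, hu, hv⟩ := mem_filter.1 (hF.mca_mem_filter u v)
  exact ⟨fun h => ⟨h hu, h hv⟩, fun h => mca_subset hC h.1 h.2⟩

lemma sum_mul_charVec {s : Finset (Finset (Fin n))} (hs : s ⊆ F) (t : Finset (Fin n) → ℝ)
    (u v : Fin n) : ∑ C ∈ s, t C * charVec C u v = ∑ C ∈ s with mca F u v ⊆ C, t C := by
  rw [sum_filter]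
  refine sum_congr rfl fun C hC => ?_
  simp only [charVec, hF.mca_subset_iff (hs hC), mul_ite, mul_one, mul_zero]

lemma parent_mem_filter {C : Finset (Fin n)} (hC : C.Nonempty) (hCu : C ≠ univ) :
    parent F C ∈ F.filter (C ⊂ ·) := by
  obtain ⟨x, hx⟩ := hC
  refine inf_id_mem_of_isChain ⟨univ, mem_filter.2 ⟨hF.1, ssubset_univ_iff.2 hCu⟩⟩
    fun A hA B hB _ => ?_
  rw [mem_coe, mem_filter] at hA hB
  exact hF.subset_or_subset hA.1 hB.1 (hA.2.subset hx) (hB.2.subset hx)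

lemma branchLength_nonneg {w : Finset (Fin n) → ℝ} (hw : MonotoneOn w F) (C : Finset (Fin n)) :
    0 ≤ branchLength F w C := by
  unfold branchLength
  split_ifs with h
  · obtain ⟨hCF, hC, hCu⟩ := h
    obtain ⟨hP, hCP⟩ := mem_filter.1 (hF.parent_mem_filter hC hCu)
    exact sub_nonneg.2 (hw hCF hP hCP.subset)
  · exact le_rfl

lemma filter_superset_eq_insert {C : Finset (Fin n)} (hCF : C ∈ F) (hC : C.Nonempty)
    (hCu : C ≠ univ) :
    (F.filter (· ≠ univ)).filter (C ⊆ ·) =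
      insert C ((F.filter (· ≠ univ)).filter (parent F C ⊆ ·)) := by
  have hCP := (mem_filter.1 (hF.parent_mem_filter hC hCu)).2
  ext D
  simp only [mem_filter, mem_insert]
  constructor
  · rintro ⟨⟨hDF, hDu⟩, hCD⟩
    rcases hCD.eq_or_ssubset with rfl | hCD
    · exact Or.inl rfl
    · exact Or.inr ⟨⟨hDF, hDu⟩, parent_subset hDF hCD⟩
  · rintro (rfl | ⟨hD, hPD⟩)
    · exact ⟨⟨hCF, hCu⟩, subset_rfl⟩
    · exact ⟨hD, hCP.subset.trans hPD⟩

lemma eq_sub_sum_branchLength (w : Finset (Fin n) → ℝ) {C : Finset (Fin n)} (hCF : C ∈ F)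
    (hC : C.Nonempty) :
    w C = w univ - ∑ D ∈ (F.filter (· ≠ univ)).filter (C ⊆ ·), branchLength F w D := by
  induction C using WellFoundedGT.induction with
  | ind C ih =>
    by_cases hCu : C = univ
    · subst hCu
      simp [filter_filter]
    obtain ⟨hPF, hCP⟩ := mem_filter.1 (hF.parent_mem_filter hC hCu)
    have hCnotin : C ∉ (F.filter (· ≠ univ)).filter (parent F C ⊆ ·) := fun h =>
      hCP.not_subset (mem_filter.1 h).2
    rw [hF.filter_superset_eq_insert hCF hC hCu, sum_insert hCnotin, branchLength,
      if_pos ⟨hCF, hC, hCu⟩, ih _ hCP hPF (hC.mono hCP.subset)]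
    ring

lemma isUltrametric_of_eq_comp_mca {d : Fin n → Fin n → ℝ} {g : Finset (Fin n) → ℝ}
    (hg : MonotoneOn g F) (hd : ∀ u v, d u v = g (mca F u v)) : IsUltrametric d := by
  refine ⟨fun u v => by rw [hd, hd, mca_comm], fun u v x _ _ _ => ?_⟩
  obtain ⟨hux, hu, hxu⟩ := mem_filter.1 (hF.mca_mem_filter u x)
  obtain ⟨hvx, hv, hxv⟩ := mem_filter.1 (hF.mca_mem_filter v x)
  obtain ⟨huv, -⟩ := mem_filter.1 (hF.mca_mem_filter u v)
  rw [hd, hd, hd]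
  rcases hF.subset_or_subset hux hvx hxu hxv with h | h
  · exact (hg huv hvx (mca_subset hvx (h hu) hv)).trans (le_max_right _ _)
  · exact (hg huv hux (mca_subset hux hu (h hv))).trans (le_max_left _ _)

end IsCladeFamily

end Clades

/-- The cone of ultrametrics with topology a fixed tree `T` (clade family `F`) is, modulo
the all-ones lineality space, generated by `{-v_C : C ∈ clade°(T)}`.  Forward direction:
every ultrametric with topology `T`, given by weights `w` on clades weakly increasing
toward the root (so its value on the pair `{u,v}` is `w (mca u v)` and its maximum is
`w [n]`), can be written as `w([n])·𝟙 − ∑_{C ∈ clade°(T)} t_C·v_C` with all `t_C ≥ 0`.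
Converse: every such nonnegative combination is an ultrametric whose value on a pair
depends only on the most recent common ancestor of the pair in `T` (i.e. its topology is
refined by `T`). -/
theorem ultrametric_cone_generators {n : ℕ} (F : Finset (Finset (Fin n)))
    (hF : IsCladeFamily F) :
    (∀ w : Finset (Fin n) → ℝ,
      (∀ A ∈ F, ∀ B ∈ F, A ⊆ B → w A ≤ w B) →
      ∃ t : Finset (Fin n) → ℝ, (∀ C, 0 ≤ t C) ∧
        ∀ u v : Fin n, u ≠ v →
          w (mca F u v) = w Finset.univ -
            ∑ C ∈ F.filter (fun A => A ≠ Finset.univ), t C * charVec C u v) ∧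
    (∀ m : ℝ, ∀ t : Finset (Fin n) → ℝ, (∀ C, 0 ≤ t C) →
      IsUltrametric (fun u v =>
        m - ∑ C ∈ F.filter (fun A => A ≠ Finset.univ), t C * charVec C u v) ∧
      ∀ u v u' v' : Fin n, u ≠ v → u' ≠ v' → mca F u v = mca F u' v' →
        (m - ∑ C ∈ F.filter (fun A => A ≠ Finset.univ), t C * charVec C u v) =
          (m - ∑ C ∈ F.filter (fun A => A ≠ Finset.univ), t C * charVec C u' v')) := by
  refine ⟨fun w hw => ⟨branchLength F w, hF.branchLength_nonneg hw, fun u v _ => ?_⟩,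
    fun m t ht => ?_⟩
  · obtain ⟨hmca, hu, -⟩ := mem_filter.1 (hF.mca_mem_filter u v)
    rw [hF.sum_mul_charVec (filter_subset _ _)]
    exact hF.eq_sub_sum_branchLength w hmca ⟨u, hu⟩
  · set g : Finset (Fin n) → ℝ := fun D => m - ∑ C ∈ F.filter (· ≠ univ) with D ⊆ C, t C
    have hd : ∀ u v, m - ∑ C ∈ F.filter (· ≠ univ), t C * charVec C u v = g (mca F u v) :=
      fun u v => by rw [hF.sum_mul_charVec (filter_subset _ _)]
    have hg : Monotone g := fun A B hAB =>
      sub_le_sub_left (antitone_sum_filter_superset _ ht hAB) m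
    refine ⟨hF.isUltrametric_of_eq_comp_mca (hg.monotoneOn _) hd, fun u v u' v' _ _ h => ?_⟩
    rw [hd, hd, h]
end

section
/- Every Laman graph is Henneberg: if H is a graph on n ≥ 2 vertices with exactly 2n − 3 edges such that every subgraph on k vertices has at most 2k − 3 edges, then H can be constructed from K₂ by a sequence of Henneberg moves. -/
/-- The graph on `Fin (n+1)` obtained from `H` on `Fin n` by adding a new vertex
(the last one) adjacent to the vertices in `s`. -/
def addVertex {n : ℕ} (H : SimpleGraph (Fin n)) (s : Finset (Fin n)) :
    SimpleGraph (Fin (n + 1)) :=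
  SimpleGraph.fromRel (fun x y =>
    (∃ x' y' : Fin n, x = x'.castSucc ∧ y = y'.castSucc ∧ H.Adj x' y') ∨
    (x = Fin.last n ∧ ∃ a ∈ s, y = a.castSucc))

/-- Henneberg graphs: `K₂`, and graphs obtained from a smaller Henneberg graph by a
Henneberg move of type 1 (new vertex joined to two existing vertices) or type 2 (delete
an edge `ab` and join a new vertex to `a`, `b` and a third vertex `c`), up to
relabeling of the vertices. -/
inductive Henneberg : (n : ℕ) → SimpleGraph (Fin n) → Prop
  | base : Henneberg 2 ⊤
  | move1 {n : ℕ} {H : SimpleGraph (Fin n)} (a b : Fin n) :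
      a ≠ b → Henneberg n H → Henneberg (n + 1) (addVertex H {a, b})
  | move2 {n : ℕ} {H : SimpleGraph (Fin n)} (a b c : Fin n) :
      H.Adj a b → c ≠ a → c ≠ b → Henneberg n H →
      Henneberg (n + 1) (addVertex (H.deleteEdges {s(a, b)}) {a, b, c})
  | iso {n : ℕ} {H H' : SimpleGraph (Fin n)} :
      SimpleGraph.Iso H H' → Henneberg n H → Henneberg n H'

/-- The number of edges of `H` lying inside the vertex set `V`. -/
noncomputable def edgesWithin {n : ℕ} (H : SimpleGraph (Fin n)) (V : Finset (Fin n)) : ℕ :=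
  Nat.card {e : Sym2 (Fin n) // e ∈ H.edgeSet ∧ ∀ v ∈ e, v ∈ V}

/-- A graph on `n` vertices is Laman if it has `2n − 3` edges and every subgraph on `v`
vertices has at most `2v − 3` edges. -/
def IsLaman (n : ℕ) (H : SimpleGraph (Fin n)) : Prop :=
  Nat.card H.edgeSet = 2 * n - 3 ∧
  ∀ V : Finset (Fin n), 2 ≤ V.card → edgesWithin H V ≤ 2 * V.card - 3

/-!
A Laman graph on at least three vertices has minimum degree at least 2 (deleting a vertex of
degree at most 1 would leave too many edges on the remaining vertices) and average degree
below 4, so some vertex has degree 2 or 3; relabel it to be the last vertex.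

Deleting a vertex of degree 2 leaves a Laman graph, which reverses a move of type 1. If the
vertex has degree 3 and neighbours `a, b, c`, the remaining graph `K` lacks one edge, and
`K + pq` is Laman as soon as no tight set of `K` (a set of `k ≥ 2` vertices spanning `2k − 3`
edges) contains both `p` and `q`. No tight set contains all of `a, b, c`, or the deleted vertex
would create a set spanning too many edges. Tight sets meeting in two vertices have a tight
union, and three tight sets that pairwise meet in at most one vertex but contain the pairs
`ab`, `ac`, `bc` have a tight union as well. Hence one of the pairs is in no tight set, and
reversing the move of type 2 on it completes the induction.
-/

open Set

namespace SimpleGraph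

variable {V W : Type*} {G : SimpleGraph V}

def IsLamanSparse (G : SimpleGraph V) : Prop :=
  ∀ s : Set V, 2 ≤ s.ncard → (G.edgeSet ∩ s.sym2).ncard ≤ 2 * s.ncard - 3

def IsLamanTight (G : SimpleGraph V) (s : Set V) : Prop :=
  2 ≤ s.ncard ∧ (G.edgeSet ∩ s.sym2).ncard = 2 * s.ncard - 3

lemma edgeSet_inter_sym2_mono {s t : Set V} (h : s ⊆ t) :
    G.edgeSet ∩ s.sym2 ⊆ G.edgeSet ∩ t.sym2 :=
  inter_subset_inter_right _ fun _ he => mem_sym2_iff_subset.2 ((mem_sym2_iff_subset.1 he).trans h)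

lemma edgeSet_inter_sym2_eq_empty {s : Set V} (hs : s.Subsingleton) :
    G.edgeSet ∩ s.sym2 = ∅ := by
  ext e
  induction e with
  | h x y =>
    simp only [mem_inter_iff, mem_edgeSet, mk_mem_sym2_iff, mem_empty_iff_false, iff_false]
    exact fun ⟨h, hx, hy⟩ => h.ne (hs hx hy)

lemma IsLamanTight.of_adj {u v : V} (h : G.Adj u v) : G.IsLamanTight {u, v} := by
  have hedges : G.edgeSet ∩ ({u, v} : Set V).sym2 = {s(u, v)} := by
    ext e
    induction e with
    | h x y =>
      simp only [mem_inter_iff, mem_edgeSet, mk_mem_sym2_iff, mem_insert_iff, mem_singleton_iff,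
        Sym2.eq_iff]
      constructor
      · rintro ⟨hxy, rfl | rfl, rfl | rfl⟩ <;> simp_all
      · rintro (⟨rfl, rfl⟩ | ⟨rfl, rfl⟩) <;> simp [h, h.symm]
  simp [IsLamanTight, hedges, ncard_pair h.ne]

lemma ncard_edgeSet_comap_inter_sym2 {f : V → W} (hf : f.Injective) (G : SimpleGraph W)
    (s : Set V) :
    ((G.comap f).edgeSet ∩ s.sym2).ncard = (G.edgeSet ∩ (f '' s).sym2).ncard := by
  have hcomap : (G.comap f).edgeSet = Sym2.map f ⁻¹' G.edgeSet := by
    ext e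
    induction e with
    | h x y => simp
  rw [hcomap, sym2_image, ← image_preimage_inter,
    ncard_image_of_injective _ (Sym2.map.injective hf)]

lemma IsLamanSparse.comap {G : SimpleGraph W} {f : V → W} (hf : f.Injective)
    (hG : G.IsLamanSparse) : (G.comap f).IsLamanSparse := by
  intro s hs
  rw [ncard_edgeSet_comap_inter_sym2 hf, ← ncard_image_of_injective s hf]
  exact hG _ (by rwa [ncard_image_of_injective s hf])

lemma IsLamanTight.of_comap {G : SimpleGraph W} {f : V → W} (hf : f.Injective) {s : Set V}
    (hs : (G.comap f).IsLamanTight s) : G.IsLamanTight (f '' s) := by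
  rw [IsLamanTight, ncard_image_of_injective s hf, ← ncard_edgeSet_comap_inter_sym2 hf]
  exact hs

lemma sup_edge_deleteEdges {u v : V} (h : ¬G.Adj u v) :
    (G ⊔ edge u v).deleteEdges {s(u, v)} = G :=
  (sup_sdiff_right_self ..).trans (sdiff_edge _ h)

section Finite

variable [Finite V]

lemma ncard_edgeSet_inter_sym2_add_le (s t : Set V) :
    (G.edgeSet ∩ s.sym2).ncard + (G.edgeSet ∩ t.sym2).ncard ≤
      (G.edgeSet ∩ (s ∪ t).sym2).ncard + (G.edgeSet ∩ (s ∩ t).sym2).ncard := by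
  rw [← ncard_union_add_ncard_inter, ← inter_inter_distrib_left, ← sym2_inter]
  gcongr
  · exact toFinite _
  · exact union_subset (edgeSet_inter_sym2_mono subset_union_left)
      (edgeSet_inter_sym2_mono subset_union_right)

lemma ncard_edgeSet_inter_sym2_insert {v : V} {s : Set V} (hv : v ∉ s) :
    (G.edgeSet ∩ (insert v s).sym2).ncard =
      (G.edgeSet ∩ s.sym2).ncard + (G.neighborSet v ∩ s).ncard := by
  have hsplit : G.edgeSet ∩ (insert v s).sym2 =
      (G.edgeSet ∩ s.sym2) ∪ (fun u => s(v, u)) '' (G.neighborSet v ∩ s) := by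
    ext e
    induction e with
    | h x y =>
      simp only [mem_inter_iff, mem_edgeSet, mk_mem_sym2_iff, mem_insert_iff, mem_union,
        mem_image, mem_neighborSet, Sym2.eq_iff]
      constructor
      · rintro ⟨h, rfl | hx, rfl | hy⟩
        · exact (h.ne rfl).elim
        · exact .inr ⟨y, ⟨h, hy⟩, .inl ⟨rfl, rfl⟩⟩
        · exact .inr ⟨x, ⟨h.symm, hx⟩, .inr ⟨rfl, rfl⟩⟩
        · exact .inl ⟨h, hx, hy⟩
      · rintro (⟨h, hx, hy⟩ | ⟨u, ⟨h, hu⟩, ⟨rfl, rfl⟩ | ⟨rfl, rfl⟩⟩)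
        · exact ⟨h, .inr hx, .inr hy⟩
        · exact ⟨h, .inl rfl, .inr hu⟩
        · exact ⟨h.symm, .inr hu, .inl rfl⟩
  have hdisj : Disjoint (G.edgeSet ∩ s.sym2) ((fun u => s(v, u)) '' (G.neighborSet v ∩ s)) := by
    rw [Set.disjoint_left]
    rintro _ ⟨-, he⟩ ⟨u, -, rfl⟩
    exact hv (mk_mem_sym2_iff.1 he).1
  have hinj : InjOn (fun u => s(v, u)) (G.neighborSet v ∩ s) :=
    fun _ _ _ _ h => Sym2.congr_right.1 h
  rw [hsplit, ncard_union_eq hdisj, hinj.ncard_image]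

lemma ncard_edgeSet_eq_add_ncard_neighborSet (v : V) :
    G.edgeSet.ncard = (G.edgeSet ∩ ({v}ᶜ : Set V).sym2).ncard + (G.neighborSet v).ncard := by
  have h := ncard_edgeSet_inter_sym2_insert (G := G) (notMem_compl_iff.2 (mem_singleton v))
  rwa [insert_eq, union_compl_self, sym2_univ, inter_univ,
    (inter_eq_left (t := {v}ᶜ)).2 fun u hu => G.ne_of_adj hu.symm] at h

lemma IsLamanSparse.two_le_ncard_neighborSet (hG : G.IsLamanSparse)
    (hcard : G.edgeSet.ncard = 2 * Nat.card V - 3) (hV : 3 ≤ Nat.card V) (v : V) :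
    2 ≤ (G.neighborSet v).ncard := by
  have hsplit := ncard_edgeSet_eq_add_ncard_neighborSet (G := G) v
  have hcompl : ({v}ᶜ : Set V).ncard = Nat.card V - 1 := by
    rw [ncard_compl, ncard_singleton]
  have := hG {v}ᶜ (by omega)
  omega

lemma IsLamanTight.union (hG : G.IsLamanSparse) {s t : Set V} (hs : G.IsLamanTight s)
    (ht : G.IsLamanTight t) (hst : 2 ≤ (s ∩ t).ncard) : G.IsLamanTight (s ∪ t) := by
  obtain ⟨hs2, hsE⟩ := hs
  obtain ⟨ht2, htE⟩ := ht
  have hunion : 2 ≤ (s ∪ t).ncard := hs2.trans (ncard_le_ncard subset_union_left)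
  have hsub := ncard_edgeSet_inter_sym2_add_le (G := G) s t
  have hcard := ncard_union_add_ncard_inter s t
  have hU := hG _ hunion
  have hI := hG _ hst
  exact ⟨hunion, by omega⟩

lemma isLamanTight_union_union (hG : G.IsLamanSparse) {s t u : Set V} (hs : G.IsLamanTight s)
    (ht : G.IsLamanTight t) (hu : G.IsLamanTight u) (hst : (s ∩ t).ncard ≤ 1)
    (hsu : (s ∩ u).ncard ≤ 1) (htu : (t ∩ u).ncard ≤ 1) {a b c : V} (ha : a ∈ s ∩ t)
    (hb : b ∈ s ∩ u) (hc : c ∈ t ∩ u) (hbc : b ≠ c) : G.IsLamanTight (s ∪ t ∪ u) := by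
  have hdisj : ∀ {x y : Set V}, (x ∩ y).ncard ≤ 1 →
      Disjoint (G.edgeSet ∩ x.sym2) (G.edgeSet ∩ y.sym2) := fun h => by
    rw [disjoint_iff_inter_eq_empty, ← inter_inter_distrib_left, ← sym2_inter]
    exact edgeSet_inter_sym2_eq_empty (ncard_le_one_iff_subsingleton.1 h)
  -- The three tight sets span disjoint edge sets, but overlap in at least three vertices.
  have hedges : (G.edgeSet ∩ s.sym2).ncard + (G.edgeSet ∩ t.sym2).ncard +
      (G.edgeSet ∩ u.sym2).ncard ≤ (G.edgeSet ∩ (s ∪ t ∪ u).sym2).ncard := by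
    rw [← ncard_union_eq (hdisj hst), ← ncard_union_eq ((hdisj hsu).union_left (hdisj htu))]
    exact ncard_le_ncard (union_subset (union_subset
      (edgeSet_inter_sym2_mono (subset_union_left.trans subset_union_left))
      (edgeSet_inter_sym2_mono (subset_union_right.trans subset_union_left)))
      (edgeSet_inter_sym2_mono subset_union_right))
  have hst1 : 1 ≤ (s ∩ t).ncard := (ncard_pos (toFinite _)).2 ⟨a, ha⟩
  have hstu2 : 2 ≤ ((s ∪ t) ∩ u).ncard := by
    rw [← ncard_pair hbc]
    exact ncard_le_ncard (pair_subset ⟨Or.inl hb.1, hb.2⟩ ⟨Or.inr hc.1, hc.2⟩)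
  have hcard₁ := ncard_union_add_ncard_inter s t
  have hcard₂ := ncard_union_add_ncard_inter (s ∪ t) u
  obtain ⟨hs2, hsE⟩ := hs
  obtain ⟨ht2, htE⟩ := ht
  obtain ⟨hu2, huE⟩ := hu
  have hunion : 2 ≤ (s ∪ t ∪ u).ncard :=
    hs2.trans (ncard_le_ncard (subset_union_left.trans subset_union_left))
  have hU := hG _ hunion
  exact ⟨hunion, by omega⟩

lemma exists_pair_not_mem_isLamanTight (hG : G.IsLamanSparse) {a b c : V} (hbc : b ≠ c)
    (habc : ∀ s, G.IsLamanTight s → a ∈ s → b ∈ s → c ∉ s) :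
    (∀ s, G.IsLamanTight s → a ∈ s → b ∉ s) ∨ (∀ s, G.IsLamanTight s → a ∈ s → c ∉ s) ∨
      (∀ s, G.IsLamanTight s → b ∈ s → c ∉ s) := by
  by_contra! h
  obtain ⟨⟨s, hs, has, hbs⟩, ⟨t, ht, hat, hct⟩, ⟨u, hu, hbu, hcu⟩⟩ := h
  have hsmall : ∀ {x y : Set V}, G.IsLamanTight x → G.IsLamanTight y →
      a ∈ x ∪ y → b ∈ x ∪ y → c ∈ x ∪ y → (x ∩ y).ncard ≤ 1 :=
    fun hx hy ha hb hc => not_lt.1 fun h => habc _ (hx.union hG hy h) ha hb hc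
  have hstu := isLamanTight_union_union hG hs ht hu
    (hsmall hs ht (.inl has) (.inl hbs) (.inr hct)) (hsmall hs hu (.inl has) (.inl hbs) (.inr hcu))
    (hsmall ht hu (.inl hat) (.inr hbu) (.inl hct)) ⟨has, hat⟩ ⟨hbs, hbu⟩ ⟨hct, hcu⟩ hbc
  exact habc _ hstu (.inl (.inl has)) (.inl (.inl hbs)) (.inr hcu)

lemma IsLamanTight.ncard_neighborSet_inter_le_two (hG : G.IsLamanSparse) {s : Set V}
    (hs : G.IsLamanTight s) {v : V} (hv : v ∉ s) : (G.neighborSet v ∩ s).ncard ≤ 2 := by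
  obtain ⟨hs2, hsE⟩ := hs
  have hins := ncard_edgeSet_inter_sym2_insert (G := G) hv
  have hcard := ncard_insert_of_notMem hv (toFinite s)
  have hsp := hG (insert v s) (by omega)
  omega

lemma IsLamanSparse.sup_edge (hG : G.IsLamanSparse) {u v : V}
    (huv : ∀ s, G.IsLamanTight s → u ∈ s → v ∉ s) : (G ⊔ edge u v).IsLamanSparse := by
  intro s hs
  have hsub : (G ⊔ edge u v).edgeSet ∩ s.sym2 ⊆ insert s(u, v) (G.edgeSet ∩ s.sym2) := by
    rintro e ⟨he, hes⟩
    rw [edgeSet_sup] at he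
    rcases he with he | he
    · exact .inr ⟨he, hes⟩
    · exact .inl (edgeSet_edge_subset he)
  by_cases hus : u ∈ s ∧ v ∈ s
  · have hlt : (G.edgeSet ∩ s.sym2).ncard ≠ 2 * s.ncard - 3 :=
      fun h => huv s ⟨hs, h⟩ hus.1 hus.2
    have := hG s hs
    have := (ncard_le_ncard hsub).trans (ncard_insert_le _ _)
    omega
  · refine (ncard_le_ncard fun e he => ?_).trans (hG s hs)
    obtain rfl | he' := hsub he
    · exact absurd he.2 hus
    · exact he'

lemma ncard_edgeSet_sup_edge {u v : V} (huv : u ≠ v) (h : ¬G.Adj u v) :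
    (G ⊔ edge u v).edgeSet.ncard = G.edgeSet.ncard + 1 := by
  rw [edgeSet_sup, edgeSet_edge_of_ne huv, union_singleton,
    ncard_insert_of_notMem (fun he => h (G.mem_edgeSet.1 he)) (toFinite _)]

end Finite

lemma sum_ncard_neighborSet [Fintype V] (G : SimpleGraph V) :
    ∑ v, (G.neighborSet v).ncard = 2 * G.edgeSet.ncard := by
  classical
  have hdeg (v : V) : (G.neighborSet v).ncard = G.degree v := by
    rw [← card_neighborFinset_eq_degree, neighborFinset_def, ncard_eq_toFinset_card']
  simpa only [hdeg, ← coe_edgeFinset, ncard_coe_finset] using G.sum_degrees_eq_twice_card_edges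

lemma IsLamanSparse.exists_ncard_neighborSet_eq_two_or_three [Fintype V] (hG : G.IsLamanSparse)
    (hcard : G.edgeSet.ncard = 2 * Nat.card V - 3) (hV : 3 ≤ Nat.card V) :
    ∃ v, (G.neighborSet v).ncard = 2 ∨ (G.neighborSet v).ncard = 3 := by
  by_contra! h
  have hdeg : ∑ _v : V, 4 ≤ ∑ v, (G.neighborSet v).ncard := Finset.sum_le_sum fun v _ => by
    have := hG.two_le_ncard_neighborSet hcard hV v
    have := h v
    omega
  rw [sum_ncard_neighborSet, Finset.sum_const, Finset.card_univ, smul_eq_mul,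
    ← Nat.card_eq_fintype_card] at hdeg
  omega

end SimpleGraph

open SimpleGraph

section LamanOnFin

variable {n : ℕ}

lemma edgesWithin_eq_ncard (H : SimpleGraph (Fin n)) (s : Finset (Fin n)) :
    edgesWithin H s = (H.edgeSet ∩ (s : Set (Fin n)).sym2).ncard := by
  rw [edgesWithin, ← Nat.card_coe_set_eq]
  exact Nat.card_congr (Equiv.subtypeEquivRight fun e => by
    rw [mem_inter_iff, mem_sym2_iff_subset]
    rfl)

lemma isLaman_iff (H : SimpleGraph (Fin n)) :
    IsLaman n H ↔ H.edgeSet.ncard = 2 * n - 3 ∧ H.IsLamanSparse := by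
  refine and_congr (by rw [Nat.card_coe_set_eq]) ⟨fun h s hs => ?_, fun h s hs => ?_⟩
  · have := h s.toFinite.toFinset (by rwa [← ncard_eq_toFinset_card])
    rwa [edgesWithin_eq_ncard, Finite.coe_toFinset, ← ncard_eq_toFinset_card] at this
  · rw [edgesWithin_eq_ncard, ← ncard_coe_finset]
    exact h s (by rwa [ncard_coe_finset])

lemma IsLaman.comap_equiv {H : SimpleGraph (Fin n)} (hH : IsLaman n H) (σ : Fin n ≃ Fin n) :
    IsLaman n (H.comap σ) := by
  obtain ⟨hcard, hsparse⟩ := (isLaman_iff H).1 hH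
  refine (isLaman_iff _).2 ⟨?_, hsparse.comap σ.injective⟩
  have := ncard_edgeSet_comap_inter_sym2 σ.injective H univ
  rwa [sym2_univ, inter_univ, image_univ, σ.range_eq_univ, sym2_univ, inter_univ,
    hcard] at this

lemma ncard_neighborSet_comap_equiv (H : SimpleGraph (Fin n)) (σ : Fin n ≃ Fin n) (v : Fin n) :
    ((H.comap σ).neighborSet v).ncard = (H.neighborSet (σ v)).ncard :=
  ncard_preimage_of_injective_subset_range σ.injective (σ.range_eq_univ ▸ subset_univ _)

lemma eq_top_of_isLaman_two {H : SimpleGraph (Fin 2)} (hH : IsLaman 2 H) : H = ⊤ := by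
  obtain ⟨e, he⟩ := nonempty_of_ncard_ne_zero (by rw [((isLaman_iff H).1 hH).1]; decide)
  induction e with
  | h x y =>
    have h01 : H.Adj 0 1 := by
      fin_cases x <;> fin_cases y <;> simp_all [H.adj_comm]
    ext u w
    fin_cases u <;> fin_cases w <;> simp [h01, h01.symm]

lemma addVertex_adj_castSucc {H : SimpleGraph (Fin n)} {s : Finset (Fin n)} {a b : Fin n} :
    (addVertex H s).Adj a.castSucc b.castSucc ↔ H.Adj a b := by
  simpa [addVertex, H.adj_comm b a, Fin.castSucc_ne_last] using fun h : H.Adj a b => h.ne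

lemma addVertex_adj_last {H : SimpleGraph (Fin n)} {s : Finset (Fin n)} {a : Fin n} :
    (addVertex H s).Adj (Fin.last n) a.castSucc ↔ a ∈ s := by
  simp [addVertex, (Fin.castSucc_ne_last _).symm]

lemma eq_addVertex (G : SimpleGraph (Fin (n + 1))) {s : Finset (Fin n)}
    (hs : Fin.castSucc ⁻¹' G.neighborSet (Fin.last n) = s) :
    G = addVertex (G.comap Fin.castSucc) s := by
  have hlast (a : Fin n) : G.Adj (Fin.last n) a.castSucc ↔ a ∈ s := by
    rw [← Finset.mem_coe, ← hs]
    rfl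
  ext x y
  induction x using Fin.lastCases <;> induction y using Fin.lastCases
  · simp
  · rw [addVertex_adj_last, hlast]
  · rw [G.adj_comm, (addVertex _ s).adj_comm, addVertex_adj_last, hlast]
  · rw [addVertex_adj_castSucc, comap_adj]

lemma ncard_preimage_castSucc_neighborSet_last (G : SimpleGraph (Fin (n + 1))) :
    (Fin.castSucc ⁻¹' G.neighborSet (Fin.last n)).ncard = (G.neighborSet (Fin.last n)).ncard :=
  ncard_preimage_of_injective_subset_range (Fin.castSucc_injective n)
    fun _ hx => Fin.exists_castSucc_eq.2 (G.ne_of_adj hx).symm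

lemma ncard_edgeSet_comap_castSucc_add (G : SimpleGraph (Fin (n + 1))) :
    (G.comap Fin.castSucc).edgeSet.ncard + (G.neighborSet (Fin.last n)).ncard =
      G.edgeSet.ncard := by
  have hrange : range (Fin.castSucc : Fin n → Fin (n + 1)) = {Fin.last n}ᶜ := by
    ext x
    exact Fin.exists_castSucc_eq
  have := ncard_edgeSet_comap_inter_sym2 (Fin.castSucc_injective n) G univ
  rw [sym2_univ, inter_univ, image_univ, hrange] at this
  rw [this, ncard_edgeSet_eq_add_ncard_neighborSet (Fin.last n)]

lemma henneberg_of_degree_two (ih : ∀ H : SimpleGraph (Fin n), IsLaman n H → Henneberg n H)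
    {G : SimpleGraph (Fin (n + 1))} (hG : IsLaman (n + 1) G)
    (hdeg : (G.neighborSet (Fin.last n)).ncard = 2) : Henneberg (n + 1) G := by
  obtain ⟨hcard, hsparse⟩ := (isLaman_iff G).1 hG
  have hK : IsLaman n (G.comap Fin.castSucc) := by
    refine (isLaman_iff _).2 ⟨?_, hsparse.comap (Fin.castSucc_injective n)⟩
    have := ncard_edgeSet_comap_castSucc_add G
    omega
  rw [← ncard_preimage_castSucc_neighborSet_last] at hdeg
  obtain ⟨a, b, hab, hN⟩ := ncard_eq_two.1 hdeg
  rw [eq_addVertex G (s := {a, b}) (by rw [hN]; simp)]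
  exact .move1 a b hab (ih _ hK)

lemma henneberg_of_free_pair (ih : ∀ H : SimpleGraph (Fin n), IsLaman n H → Henneberg n H)
    {G : SimpleGraph (Fin (n + 1))} (hG : IsLaman (n + 1) G) {p q r : Fin n} (hpq : p ≠ q)
    (hrp : r ≠ p) (hrq : r ≠ q) (hN : Fin.castSucc ⁻¹' G.neighborSet (Fin.last n) = {p, q, r})
    (hfree : ∀ s, (G.comap Fin.castSucc).IsLamanTight s → p ∈ s → q ∉ s) :
    Henneberg (n + 1) G := by
  obtain ⟨hcard, hsparse⟩ := (isLaman_iff G).1 hG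
  have hsplit := ncard_edgeSet_comap_castSucc_add G
  set K := G.comap Fin.castSucc
  have hnadj : ¬K.Adj p q := fun h => hfree _ (.of_adj h) (by simp) (by simp)
  have hdeg : (G.neighborSet (Fin.last n)).ncard = 3 := by
    rw [← ncard_preimage_castSucc_neighborSet_last, hN,
      ncard_eq_three.2 ⟨p, q, r, hpq, hrp.symm, hrq.symm, rfl⟩]
  have hK : IsLaman n (K ⊔ edge p q) := by
    refine (isLaman_iff _).2 ⟨?_, (hsparse.comap (Fin.castSucc_injective n)).sup_edge hfree⟩
    rw [ncard_edgeSet_sup_edge hpq hnadj]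
    omega
  have hmove := Henneberg.move2 p q r (by simp [edge_adj, hpq]) hrp hrq (ih _ hK)
  rwa [sup_edge_deleteEdges hnadj, ← eq_addVertex G (by rw [hN]; simp)] at hmove

lemma henneberg_of_degree_three (ih : ∀ H : SimpleGraph (Fin n), IsLaman n H → Henneberg n H)
    {G : SimpleGraph (Fin (n + 1))} (hG : IsLaman (n + 1) G)
    (hdeg : (G.neighborSet (Fin.last n)).ncard = 3) : Henneberg (n + 1) G := by
  have hsparse := ((isLaman_iff G).1 hG).2
  rw [← ncard_preimage_castSucc_neighborSet_last] at hdeg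
  obtain ⟨a, b, c, hab, hac, hbc, hN⟩ := ncard_eq_three.1 hdeg
  have habc : ∀ s, (G.comap Fin.castSucc).IsLamanTight s → a ∈ s → b ∈ s → c ∉ s := by
    intro s hs ha hb hc
    have hsub : G.neighborSet (Fin.last n) ⊆ Fin.castSucc '' s := by
      intro x hx
      obtain ⟨y, rfl⟩ := Fin.exists_castSucc_eq.2 (G.ne_of_adj hx).symm
      have hy : y ∈ ({a, b, c} : Set (Fin n)) := hN ▸ hx
      refine ⟨y, ?_, rfl⟩
      rcases hy with rfl | rfl | rfl <;> assumption
    have := (hs.of_comap (Fin.castSucc_injective n)).ncard_neighborSet_inter_le_two hsparse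
      (v := Fin.last n) (by simp [Fin.castSucc_ne_last])
    rw [inter_eq_left.2 hsub, ← ncard_preimage_castSucc_neighborSet_last, hdeg] at this
    omega
  rcases exists_pair_not_mem_isLamanTight (hsparse.comap (Fin.castSucc_injective n)) hbc habc
    with h | h | h
  · exact henneberg_of_free_pair ih hG hab hac.symm hbc.symm hN h
  · exact henneberg_of_free_pair ih hG hac hab.symm hbc (by rw [hN, pair_comm]) h
  · exact henneberg_of_free_pair ih hG hbc hab hac (by rw [hN, insert_comm, pair_comm]) h

end LamanOnFin

/-- Every Laman graph is Henneberg: a graph on `n ≥ 2` vertices with `2n − 3` edges in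
which every subgraph on `k` vertices has at most `2k − 3` edges can be constructed from
`K₂` by a sequence of Henneberg moves. -/
theorem laman_is_henneberg {n : ℕ} (hn : 2 ≤ n) (H : SimpleGraph (Fin n))
    (hH : IsLaman n H) : Henneberg n H := by
  induction n, hn using Nat.le_induction with
  | base => rw [eq_top_of_isLaman_two hH]; exact .base
  | succ n hn ih =>
    obtain ⟨hcard, hsparse⟩ := (isLaman_iff H).1 hH
    obtain ⟨v, hv⟩ := hsparse.exists_ncard_neighborSet_eq_two_or_three
      (by rwa [Nat.card_fin]) (by rw [Nat.card_fin]; omega)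
    let σ := Equiv.swap v (Fin.last n)
    refine .iso (Iso.comap σ H) ?_
    rw [← Equiv.swap_apply_right v (Fin.last n), ← ncard_neighborSet_comap_equiv] at hv
    rcases hv with h2 | h3
    · exact henneberg_of_degree_two ih (hH.comap_equiv σ) h2
    · exact henneberg_of_degree_three ih (hH.comap_equiv σ) h3
end
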